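/- arXiv:2203.01822 — 2 statements merged into one kernel-verified Lean document; each statement's English description precedes it below -/
import Mathlib

section
/- Let f : ℝ → ℝ be n-times differentiable, let λ₁,…,λ_k be distinct reals with multiplicities m₁,…,m_k summing to n, and let L be the Hermite interpolation polynomial of f of degree < n (so L^{(m)}(λ_j) = f^{(m)}(λ_j) for 0 ≤ m < m_j). Then for every x₀ ∈ ℝ there exists ξ in the convex hull of {x₀, λ₁,…,λ_k} such that f(x₀) − L(x₀) = (f^{(n)}(ξ)/n!) · (x₀ − λ₁)^{m₁} ⋯ (x₀ − λ_k)^{m_k}. -/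
/-!
Choose `c` so that `P = L + c W`, with `W = ∏ (X - λⱼ)^mⱼ`, also interpolates `f` at `x₀`. Then
`f - P` has `n + 1` zeros, counted with multiplicity, among `x₀` and the nodes. Differentiating
loses at most one zero (Rolle between consecutive distinct zeros, and a zero of order `k` of `g` is
one of order `k - 1` of `g'`), so `f⁽ⁿ⁾ - P⁽ⁿ⁾ = f⁽ⁿ⁾ - c n!` vanishes in their convex hull.
-/

open Polynomial

theorem Polynomial.Monic.iterate_derivative_natDegree {R : Type*} [Semiring R] {p : R[X]}
    (hp : p.Monic) : derivative^[p.natDegree] p = C (p.natDegree.factorial : R) := by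
  have hdeg : (derivative^[p.natDegree] p).natDegree ≤ 0 :=
    (natDegree_iterate_derivative p _).trans (by rw [Nat.sub_self])
  rw [eq_C_of_natDegree_le_zero hdeg, coeff_iterate_derivative, zero_add, Nat.descFactorial_self,
    hp.coeff_natDegree, nsmul_one]

theorem Polynomial.eval_iterate_derivative_multiset_prod_X_sub_C {R : Type*} [CommRing R]
    [IsDomain R] [DecidableEq R] (Z : Multiset R) {a : R} {d : ℕ} (hd : d < Z.count a) :
    (derivative^[d] (Z.map fun x => X - C x).prod).eval a = 0 :=
  isRoot_iterate_derivative_of_lt_rootMultiplicity <| by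
    rwa [← count_roots, roots_multiset_prod_X_sub_C]

theorem Polynomial.iteratedDeriv_eval {𝕜 : Type*} [NontriviallyNormedField 𝕜] (p : 𝕜[X])
    (d : ℕ) : iteratedDeriv d (fun x => p.eval x) = fun x => (derivative^[d] p).eval x := by
  induction d with
  | zero => simp
  | succ d ih =>
    ext x
    rw [iteratedDeriv_succ, ih, Polynomial.deriv, Function.iterate_succ_apply']

theorem iteratedDeriv_sub_of_differentiable {𝕜 F : Type*} [NontriviallyNormedField 𝕜]
    [NormedAddCommGroup F] [NormedSpace 𝕜 F] {f g : 𝕜 → F} {d : ℕ}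
    (hf : ∀ i < d, Differentiable 𝕜 (iteratedDeriv i f))
    (hg : ∀ i < d, Differentiable 𝕜 (iteratedDeriv i g)) :
    iteratedDeriv d (f - g) = iteratedDeriv d f - iteratedDeriv d g := by
  induction d with
  | zero => simp
  | succ d ih =>
    ext x
    rw [iteratedDeriv_succ, ih (fun i hi => hf i (by omega)) (fun i hi => hg i (by omega)),
      deriv_sub ((hf d d.lt_succ_self).differentiableAt) ((hg d d.lt_succ_self).differentiableAt),
      iteratedDeriv_succ, iteratedDeriv_succ, Pi.sub_apply]

theorem exists_finset_deriv_eq_zero {g : ℝ → ℝ} (hg : Differentiable ℝ g) {S : Finset ℝ}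
    (hS : ∀ x ∈ S, g x = 0) :
    ∃ T : Finset ℝ, Disjoint T S ∧ S.card ≤ T.card + 1 ∧
      (∀ z ∈ T, z ∈ convexHull ℝ (S : Set ℝ)) ∧ ∀ z ∈ T, deriv g z = 0 := by
  have hrolle : ∀ x ∈ S, ∀ y ∈ S, x < y → ∃ z ∈ Set.Ioo x y, deriv g z = 0 :=
    fun x hx y hy hxy => exists_deriv_eq_zero hxy hg.continuous.continuousOn
      (by rw [hS x hx, hS y hy])
  choose! r hr_mem hr_zero using hrolle
  set T := ((S ×ˢ S).filter fun p => p.1 < p.2).image fun p => r p.1 p.2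
  have hT : ∀ z ∈ T, ∃ x ∈ S, ∃ y ∈ S, x < y ∧ z = r x y := by
    simp only [T, Finset.mem_image, Finset.mem_filter, Finset.mem_product]
    rintro z ⟨⟨x, y⟩, ⟨⟨hx, hy⟩, hxy⟩, rfl⟩
    exact ⟨x, hx, y, hy, hxy, rfl⟩
  refine ⟨T \ S, Finset.sdiff_disjoint, ?_, fun z hz => ?_, fun z hz => ?_⟩
  · exact Finset.card_le_sdiff_of_interleaved fun x hx y hy hxy _ =>
      ⟨r x y, Finset.mem_image.mpr ⟨(x, y), by simp [hx, hy, hxy], rfl⟩, hr_mem x hx y hy hxy⟩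
  · obtain ⟨x, hx, y, hy, hxy, rfl⟩ := hT z (Finset.mem_sdiff.mp hz).1
    exact (convex_convexHull ℝ _).ordConnected.out (subset_convexHull ℝ _ hx)
      (subset_convexHull ℝ _ hy) (Set.Ioo_subset_Icc_self (hr_mem x hx y hy hxy))
  · obtain ⟨x, hx, y, hy, hxy, rfl⟩ := hT z (Finset.mem_sdiff.mp hz).1
    exact hr_zero x hx y hy hxy

def HasZeroMultiset (g : ℝ → ℝ) (Z : Multiset ℝ) : Prop :=
  ∀ x, ∀ d < Z.count x, iteratedDeriv d g x = 0

namespace HasZeroMultiset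

variable {g : ℝ → ℝ} {Z : Multiset ℝ}

theorem exists_deriv (hg : Differentiable ℝ g) (hZ : HasZeroMultiset g Z) :
    ∃ Z' : Multiset ℝ, Multiset.card Z ≤ Multiset.card Z' + 1 ∧
      (∀ y ∈ Z', y ∈ convexHull ℝ {x | x ∈ Z}) ∧ HasZeroMultiset (deriv g) Z' := by
  obtain ⟨T, hTS, hcard, hThull, hTzero⟩ := exists_finset_deriv_eq_zero hg
    (S := Z.toFinset) fun x hx => hZ x 0 (Multiset.count_pos.mpr (Multiset.mem_toFinset.mp hx))
  -- `Z - Z.dedup` lowers every multiplicity by one.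
  refine ⟨Z - Z.dedup + T.val, ?_, ?_, ?_⟩
  · have := Multiset.card_le_card (Multiset.dedup_le Z)
    rw [Multiset.card_toFinset] at hcard
    rw [Multiset.card_add, Multiset.card_sub (Multiset.dedup_le Z), Finset.card_val]
    omega
  · intro y hy
    rcases Multiset.mem_add.mp hy with hy | hy
    · exact subset_convexHull ℝ _ (Multiset.mem_of_le (Multiset.sub_le_self _ _) hy)
    · exact convexHull_mono (fun x hx => Multiset.mem_toFinset.mp hx) (hThull y hy)
  · intro x d hd
    rw [Multiset.count_add, Multiset.count_sub, Multiset.count_dedup] at hd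
    by_cases hx : x ∈ Z
    · have hxT : x ∉ T := Finset.disjoint_right.mp hTS (Multiset.mem_toFinset.mpr hx)
      rw [if_pos hx, Multiset.count_eq_zero.mpr hxT] at hd
      rw [← iteratedDeriv_succ']
      exact hZ x (d + 1) (by omega)
    · rw [if_neg hx, Multiset.count_eq_zero.mpr hx] at hd
      have hxT : x ∈ T := Multiset.count_pos.mp (by omega)
      rw [Multiset.count_eq_one_of_mem T.nodup hxT] at hd
      rw [Nat.lt_one_iff.mp (by omega : d < 1), iteratedDeriv_zero]
      exact hTzero x hxT

theorem exists_iteratedDeriv_eq_zero {N : ℕ} (hg : ∀ i < N, Differentiable ℝ (iteratedDeriv i g))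
    (hZ : HasZeroMultiset g Z) (hN : N < Multiset.card Z) :
    ∃ ξ ∈ convexHull ℝ {x | x ∈ Z}, iteratedDeriv N g ξ = 0 := by
  induction N generalizing g Z with
  | zero =>
    obtain ⟨x, hx⟩ := Multiset.card_pos_iff_exists_mem.mp hN
    exact ⟨x, subset_convexHull ℝ _ hx, hZ x 0 (Multiset.count_pos.mpr hx)⟩
  | succ N ih =>
    have hg' : ∀ i < N, Differentiable ℝ (iteratedDeriv i (deriv g)) := fun i hi => by
      simpa only [iteratedDeriv_succ'] using hg (i + 1) (by omega)
    obtain ⟨Z', hcard, hsub, hZ'⟩ :=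
      hZ.exists_deriv (by simpa using hg 0 N.succ_pos)
    obtain ⟨ξ, hξ, hξ0⟩ := ih hg' hZ' (by omega)
    refine ⟨ξ, convexHull_min hsub (convex_convexHull ℝ _) hξ, ?_⟩
    rwa [iteratedDeriv_succ']

end HasZeroMultiset

def HermiteInterpolates (P : ℝ[X]) (f : ℝ → ℝ) (Z : Multiset ℝ) : Prop :=
  ∀ x, ∀ d < Z.count x, (derivative^[d] P).eval x = iteratedDeriv d f x

theorem HermiteInterpolates.cons_add_C_mul {P : ℝ[X]} {f : ℝ → ℝ} {Z : Multiset ℝ} {x₀ c : ℝ}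
    (hP : HermiteInterpolates P f Z) (hx₀ : x₀ ∉ Z)
    (hc : (P + C c * (Z.map fun x => X - C x).prod).eval x₀ = f x₀) :
    HermiteInterpolates (P + C c * (Z.map fun x => X - C x).prod) f (x₀ ::ₘ Z) := by
  intro x d hd
  rw [Multiset.count_cons] at hd
  by_cases hx : x = x₀
  · rw [hx, if_pos rfl, Multiset.count_eq_zero.mpr hx₀] at hd
    obtain rfl : d = 0 := by omega
    rw [hx, Function.iterate_zero_apply, iteratedDeriv_zero, hc]
  · rw [if_neg hx] at hd
    rw [iterate_map_add, iterate_derivative_C_mul, eval_add, eval_mul,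
      eval_iterate_derivative_multiset_prod_X_sub_C Z hd, hP x d hd, mul_zero, add_zero]

theorem HermiteInterpolates.exists_iteratedDeriv_eq {N : ℕ} {f : ℝ → ℝ} {P : ℝ[X]}
    {Z : Multiset ℝ} (hP : HermiteInterpolates P f Z)
    (hf : ∀ i < N, Differentiable ℝ (iteratedDeriv i f)) (hZ : Multiset.card Z = N + 1) :
    ∃ ξ ∈ convexHull ℝ {x | x ∈ Z}, iteratedDeriv N f ξ = (derivative^[N] P).eval ξ := by
  have hsub : ∀ d ≤ N, iteratedDeriv d (f - fun x => P.eval x) =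
      fun x => iteratedDeriv d f x - (derivative^[d] P).eval x := fun d hd => by
    rw [iteratedDeriv_sub_of_differentiable (fun i hi => hf i (by omega))
      (fun i _ => by rw [P.iteratedDeriv_eval]; exact Polynomial.differentiable _),
      P.iteratedDeriv_eval]
    rfl
  have hzeros : HasZeroMultiset (f - fun x => P.eval x) Z := fun x d hd => by
    have := Multiset.count_le_card x Z
    rw [hsub d (by omega)]
    exact sub_eq_zero.mpr (hP x d hd).symm
  obtain ⟨ξ, hξ, hξ0⟩ := hzeros.exists_iteratedDeriv_eq_zero
    (fun i hi => by rw [hsub i hi.le]; exact (hf i hi).sub (Polynomial.differentiable _))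
    (by omega)
  rw [hsub N le_rfl] at hξ0
  exact ⟨ξ, hξ, sub_eq_zero.mp hξ0⟩

theorem HermiteInterpolates.exists_remainder {n : ℕ} {f : ℝ → ℝ} {L : ℝ[X]} {Z : Multiset ℝ}
    (hL : HermiteInterpolates L f Z) (hf : ∀ i < n, Differentiable ℝ (iteratedDeriv i f))
    (hZ : Multiset.card Z = n) (hdeg : L.degree < n) (x₀ : ℝ) :
    ∃ ξ ∈ convexHull ℝ {x | x ∈ x₀ ::ₘ Z},
      f x₀ - L.eval x₀ = iteratedDeriv n f ξ / n.factorial * (Z.map (x₀ - ·)).prod := by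
  by_cases hx₀ : x₀ ∈ Z
  · refine ⟨x₀, subset_convexHull ℝ _ (Multiset.mem_cons_self _ _), ?_⟩
    rw [Multiset.prod_eq_zero (Multiset.mem_map.mpr ⟨x₀, hx₀, sub_self x₀⟩), mul_zero, sub_eq_zero]
    simpa using (hL x₀ 0 (Multiset.count_pos.mpr hx₀)).symm
  set W := (Z.map fun x => X - C x).prod
  have hW : W.eval x₀ = (Z.map (x₀ - ·)).prod := by
    simp [W, eval_multiset_prod, Multiset.map_map]
  have hW₀ : W.eval x₀ ≠ 0 := by
    rw [hW]
    simp [Multiset.prod_eq_zero_iff, sub_eq_zero, hx₀]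
  have hWn : derivative^[n] W = C (n.factorial : ℝ) := by
    have hmonic : W.Monic := monic_multiset_prod_of_monic Z _ fun x _ => monic_X_sub_C x
    rw [← hZ, ← natDegree_multiset_prod_X_sub_C_eq_card, hmonic.iterate_derivative_natDegree]
  set c := (f x₀ - L.eval x₀) / W.eval x₀
  have hc : (L + C c * W).eval x₀ = f x₀ := by
    rw [eval_add, eval_mul, eval_C, div_mul_cancel₀ _ hW₀]
    ring
  obtain ⟨ξ, hξ, hfξ⟩ := (hL.cons_add_C_mul hx₀ hc).exists_iteratedDeriv_eq hf
    (by rw [Multiset.card_cons, hZ])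
  refine ⟨ξ, hξ, ?_⟩
  rw [hfξ, iterate_map_add, iterate_derivative_C_mul, hWn,
    iterate_derivative_eq_zero_of_degree_lt hdeg, ← hW, zero_add, eval_mul, eval_C, eval_C,
    mul_div_cancel_right₀ _ (Nat.cast_ne_zero.mpr n.factorial_ne_zero), div_mul_cancel₀ _ hW₀]

theorem hermite_interpolation_remainder_general
    {k n : ℕ} (f : ℝ → ℝ)
    (hf : ∀ i < n, Differentiable ℝ (iteratedDeriv i f))
    (lam : Fin k → ℝ) (hinj : Function.Injective lam)
    (m : Fin k → ℕ) (hsum : ∑ j, m j = n)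
    (L : Polynomial ℝ) (hdeg : L.degree < n)
    (hinterp : ∀ (j : Fin k) (d : ℕ), d < m j →
      (Polynomial.derivative^[d] L).eval (lam j) = iteratedDeriv d f (lam j))
    (x₀ : ℝ) :
    ∃ ξ ∈ convexHull ℝ (insert x₀ (Set.range lam)),
      f x₀ - L.eval x₀ =
        iteratedDeriv n f ξ / (Nat.factorial n) * ∏ j, (x₀ - lam j) ^ m j := by
  set Z := ∑ j, Multiset.replicate (m j) (lam j)
  have hmem : ∀ x ∈ Z, x ∈ Set.range lam := by
    simp only [Z, Multiset.mem_sum, Multiset.mem_replicate]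
    rintro x ⟨j, -, -, rfl⟩
    exact ⟨j, rfl⟩
  have hcount : ∀ j, Z.count (lam j) = m j := fun j => by
    simp [Z, Multiset.count_sum', Multiset.count_replicate, hinj.eq_iff]
  have hL : HermiteInterpolates L f Z := by
    intro x d hd
    obtain ⟨j, rfl⟩ := hmem x (Multiset.count_pos.mp (by omega))
    exact hinterp j d (hcount j ▸ hd)
  obtain ⟨ξ, hξ, heq⟩ := hL.exists_remainder hf (by simp [Z, hsum]) hdeg x₀
  refine ⟨ξ, convexHull_mono ?_ hξ, ?_⟩
  · intro x hx
    rcases Multiset.mem_cons.mp hx with rfl | hx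
    exacts [Set.mem_insert _ _, Set.mem_insert_of_mem _ (hmem x hx)]
  · rw [heq, ← Multiset.coe_mapAddMonoidHom, map_sum, Multiset.prod_sum]
    simp

theorem hermite_interpolation_remainder
    {k n : ℕ} (f : ℝ → ℝ)
    (hf : ∀ i < n, Differentiable ℝ (iteratedDeriv i f))
    (lam : Fin k → ℝ) (hinj : Function.Injective lam)
    (m : Fin k → ℕ) (hm : ∀ j, 0 < m j) (hsum : ∑ j, m j = n)
    (L : Polynomial ℝ) (hdeg : L.degree < n)
    (hinterp : ∀ (j : Fin k) (d : ℕ), d < m j →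
      (Polynomial.derivative^[d] L).eval (lam j) = iteratedDeriv d f (lam j))
    (x₀ : ℝ) :
    ∃ ξ ∈ convexHull ℝ (insert x₀ (Set.range lam)),
      f x₀ - L.eval x₀ =
        iteratedDeriv n f ξ / (Nat.factorial n) * ∏ j, (x₀ - lam j) ^ m j :=
  hermite_interpolation_remainder_general f hf lam hinj m hsum L hdeg hinterp x₀
end

section
/- Let A be a linear operator on a finite-dimensional complex vector space V annihilated by T(x) = ∏_{i=1}^k (x−λ_i)^{m_i} with λ_i distinct, and let F be an entire function. Then F(A) = Σ_{i=1}^k P_i(A) · L_i(A), where P_i(x) = Σ_{p=0}^{m_i−1} F^{(p)}(λ_i)(x−λ_i)^p/p! is the Taylor polynomial of F of degree m_i − 1 at λ_i, and L_i(A) is the principal Lagrange resolvent of A corresponding to λ_i. -/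
/-!
The Hermite conditions on `That` say that `∑ i, That i - 1`, and `That i` for `j ≠ i`, vanish to
order `m j` at `lam j`; since the factors `(X - lam j) ^ m j` are pairwise coprime, `T` divides
`∑ i, That i - 1` and `(X - lam i) ^ m i * That i`. Hence the operators `L i = That i (A)` sum to
the identity and `(A - lam i) ^ m i * L i = 0`. On the range of `L i`, expanding
`A ^ n = ((A - lam i) + lam i) ^ n` binomially collapses `∑ a n • A ^ n` to a finite sum in the
powers `(A - lam i) ^ p`, `p < m i`, whose coefficients are those of the power series of `F`
re-expanded about `lam i`, i.e. its Taylor coefficients `F⁽ᵖ⁾(lam i) / p!`.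
-/

open Polynomial Finset

namespace FormalMultilinearSeries

variable {𝕜 : Type*} [RCLike 𝕜]

theorem ofScalars_radius_eq_top_of_forall_summable {a : ℕ → 𝕜}
    (ha : ∀ x : 𝕜, Summable fun n => a n * x ^ n) : (ofScalars 𝕜 a).radius = ⊤ := by
  refine ENNReal.eq_top_of_forall_nnreal_le fun r =>
    (ofScalars 𝕜 a).le_radius_of_tendsto (l := 0) ?_
  have h := (ha ((r : ℝ) : 𝕜)).tendsto_atTop_zero.norm
  simpa [ofScalars_norm, norm_mul, norm_pow] using h

theorem changeOriginSeries_ofScalars_apply_one (a : ℕ → 𝕜) (p l : ℕ) (t : 𝕜) :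
    (ofScalars 𝕜 a).changeOriginSeries p l (fun _ => t) (fun _ => 1) =
      ((p + l).choose p : 𝕜) * a (p + l) * t ^ l := by
  have hterm : ∀ s : { s : Finset (Fin (p + l)) // s.card = l },
      (ofScalars 𝕜 a).changeOriginSeriesTerm p l s.1 s.2 (fun _ => t) (fun _ => 1) =
        a (p + l) * t ^ l := by
    rintro ⟨s, hs⟩
    rw [changeOriginSeriesTerm_apply]
    simp [ofScalars, List.prod_ofFn, prod_piecewise, hs]
  rw [changeOriginSeries, _root_.sum_apply, _root_.sum_apply, sum_congr rfl fun s _ => hterm s,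
    sum_const, card_univ, nsmul_eq_mul, mul_assoc, Fintype.card_subtype, ← powerset_univ,
    ← powersetCard_eq_filter, card_powersetCard, card_univ, Fintype.card_fin,
    Nat.choose_symm_add]

end FormalMultilinearSeries

open FormalMultilinearSeries in
theorem hasSum_choose_mul_pow_iteratedDeriv {𝕜 : Type*} [RCLike 𝕜] {F : 𝕜 → 𝕜} {a : ℕ → 𝕜}
    (hF : ∀ x, HasSum (fun n => a n * x ^ n) (F x)) (t : 𝕜) (p : ℕ) :
    HasSum (fun n => (n.choose p : 𝕜) * a n * t ^ (n - p))
      (iteratedDeriv p F t / p.factorial) := by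
  set q := ofScalars 𝕜 a
  have hrad : q.radius = ⊤ := ofScalars_radius_eq_top_of_forall_summable fun x => (hF x).summable
  have hF0 : HasFPowerSeriesOnBall F q 0 ⊤ :=
    ⟨hrad.ge, ENNReal.zero_lt_top, fun {y} _ => by
      simpa [q, ofScalars_apply_eq, mul_comm] using hF y⟩
  have hFt : HasFPowerSeriesOnBall F (q.changeOrigin t) t ⊤ := by
    simpa using hF0.changeOrigin (y := t) (by simp)
  have hcoeff : q.changeOrigin t p (fun _ => 1) = iteratedDeriv p F t / p.factorial := by
    rw [iteratedDeriv_eq_iteratedFDeriv, ← hFt.factorial_smul 1 p, nsmul_eq_mul,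
      mul_div_cancel_left₀ _ (Nat.cast_ne_zero.mpr p.factorial_ne_zero)]
  have hseries : HasSum (fun l => q.changeOriginSeries p l (fun _ => t) (fun _ => 1))
      (q.changeOrigin t p (fun _ => 1)) := by
    have hrad' : (q.changeOriginSeries p).radius = ⊤ :=
      top_le_iff.mp (hrad ▸ q.le_changeOriginSeries_radius p)
    exact (ContinuousMultilinearMap.apply 𝕜 (fun _ : Fin p => 𝕜) 𝕜 fun _ => 1).hasSum
      ((q.changeOriginSeries p).hasSum (by simp [hrad']))
  have hshift : ∀ n ∉ Set.range (p + ·), (n.choose p : 𝕜) * a n * t ^ (n - p) = 0 := by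
    intro n hn
    have : n < p := by
      by_contra! h
      exact hn ⟨n - p, Nat.add_sub_cancel' h⟩
    simp [Nat.choose_eq_zero_of_lt this]
  rw [← hcoeff, ← (add_right_injective p).hasSum_iff hshift]
  simp only [q, changeOriginSeries_ofScalars_apply_one] at hseries
  simpa [Function.comp_def] using hseries

theorem Polynomial.X_sub_C_pow_dvd_of_iterate_derivative_eval_eq_zero {R : Type*} [CommRing R]
    [NoZeroDivisors R] [CharZero R] {q : R[X]} {t : R} {m : ℕ}
    (h : ∀ d < m, (derivative^[d] q).eval t = 0) : (X - C t) ^ m ∣ q := by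
  rcases eq_or_ne q 0 with rfl | hq
  · exact dvd_zero _
  cases m with
  | zero => simp
  | succ m =>
    exact (le_rootMultiplicity_iff hq).mp
      (lt_rootMultiplicity_of_isRoot_iterate_derivative hq fun d hd => h d (Nat.lt_succ_of_le hd))

section Hermite

variable {K ι : Type*} [Field K] [CharZero K] [DecidableEq ι] {lam : ι → K} {m : ι → ℕ}
  {L : ι → K[X]}

theorem Polynomial.X_sub_C_pow_dvd_sum_sub_one [Fintype ι]
    (hL : ∀ i j d, d < m j →
      (derivative^[d] (L i)).eval (lam j) = if j = i ∧ d = 0 then 1 else 0)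
    (j : ι) : (X - C (lam j)) ^ m j ∣ ∑ i, L i - 1 := by
  refine X_sub_C_pow_dvd_of_iterate_derivative_eval_eq_zero fun d hd => ?_
  rw [iterate_derivative_sub, iterate_derivative_sum, eval_sub, eval_finsetSum]
  simp only [hL _ j d hd]
  rcases Nat.eq_zero_or_pos d with rfl | hd0
  · simp
  · simp [iterate_derivative_one hd0, hd0.ne']

theorem Polynomial.X_sub_C_pow_dvd_of_ne
    (hL : ∀ i j d, d < m j →
      (derivative^[d] (L i)).eval (lam j) = if j = i ∧ d = 0 then 1 else 0)
    {i j : ι} (hji : j ≠ i) : (X - C (lam j)) ^ m j ∣ L i :=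
  X_sub_C_pow_dvd_of_iterate_derivative_eval_eq_zero fun d hd => by simp [hL i j d hd, hji]

end Hermite

theorem Polynomial.aeval_sum_C_mul_X_sub_C_pow {R S : Type*} [CommRing R] [Ring S] [Algebra R S]
    (x : S) (μ : R) (s : Finset ℕ) (c : ℕ → R) :
    aeval x (∑ p ∈ s, C (c p) * (X - C μ) ^ p) = ∑ p ∈ s, c p • (x - algebraMap R S μ) ^ p := by
  simp [Algebra.smul_def]

theorem Module.End.pow_apply_eq_sum_of_pow_sub_apply_eq_zero {R M : Type*} [CommRing R]
    [AddCommGroup M] [Module R M] {A : Module.End R M} {μ : R} {m : ℕ} {w : M}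
    (hw : ((A - algebraMap R _ μ) ^ m) w = 0) (n : ℕ) :
    (A ^ n) w =
      ∑ p ∈ range m, ((n.choose p : R) * μ ^ (n - p)) • ((A - algebraMap R _ μ) ^ p) w := by
  set N := A - algebraMap R _ μ
  set f : ℕ → M := fun p => ((n.choose p : R) * μ ^ (n - p)) • (N ^ p) w
  have hf : ∀ p, (n < p ∨ m ≤ p) → f p = 0 := by
    rintro p (hp | hp)
    · simp [f, Nat.choose_eq_zero_of_lt hp]
    · simp only [f]
      rw [← Nat.sub_add_cancel hp, pow_add, mul_apply, hw, map_zero, smul_zero]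
  have hbinom : (A ^ n) w = ∑ p ∈ range (n + 1), f p := by
    rw [← sub_add_cancel A (algebraMap R _ μ), (Algebra.commute_algebraMap_right μ N).add_pow]
    simp only [f, LinearMap.sum_apply, ← map_pow, mul_smul]
    refine sum_congr rfl fun p _ => ?_
    simp [mul_apply, Nat.cast_smul_eq_nsmul, -map_pow, Module.algebraMap_end_apply]
  have htrunc : ∀ k, min (n + 1) m ≤ k →
      ∑ p ∈ range k, f p = ∑ p ∈ range (min (n + 1) m), f p :=
    fun k hk => (sum_subset (range_mono hk) fun p _ hp => hf p (by simp at hp; omega)).symm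
  rw [hbinom, htrunc _ (min_le_left _ _), htrunc _ (min_le_right _ _)]

theorem hasSum_smul_pow_apply_of_pow_sub_apply_eq_zero {𝕜 V : Type*} [RCLike 𝕜]
    [AddCommGroup V] [Module 𝕜 V] [TopologicalSpace V] [ContinuousAdd V] [ContinuousSMul 𝕜 V]
    {F : 𝕜 → 𝕜} {a : ℕ → 𝕜} (hF : ∀ x, HasSum (fun n => a n * x ^ n) (F x))
    {A : Module.End 𝕜 V} {μ : 𝕜} {m : ℕ} {w : V} (hw : ((A - algebraMap 𝕜 _ μ) ^ m) w = 0) :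
    HasSum (fun n => a n • (A ^ n) w)
      (∑ p ∈ range m, (iteratedDeriv p F μ / p.factorial) • ((A - algebraMap 𝕜 _ μ) ^ p) w) := by
  convert hasSum_sum fun p (_ : p ∈ range m) =>
    (hasSum_choose_mul_pow_iteratedDeriv hF μ p).smul_const (((A - algebraMap 𝕜 _ μ) ^ p) w)
    with n
  rw [Module.End.pow_apply_eq_sum_of_pow_sub_apply_eq_zero hw, smul_sum]
  refine sum_congr rfl fun p _ => ?_
  rw [smul_smul]
  ring_nf

theorem entire_function_of_operator_via_resolvents_general
    {V : Type*} [NormedAddCommGroup V] [NormedSpace ℂ V]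
    {k : ℕ} (A : Module.End ℂ V)
    (lam : Fin k → ℂ) (hinj : Function.Injective lam)
    (m : Fin k → ℕ)
    (hTA : Polynomial.aeval A (∏ j, (Polynomial.X - Polynomial.C (lam j)) ^ m j) = 0)
    (That : Fin k → Polynomial ℂ)
    (hinterp : ∀ (i j : Fin k) (d : ℕ), d < m j →
      (Polynomial.derivative^[d] (That i)).eval (lam j) =
        if j = i ∧ d = 0 then 1 else 0)
    (F : ℂ → ℂ) (a : ℕ → ℂ)
    (hFa : ∀ x : ℂ, HasSum (fun i : ℕ => a i * x ^ i) (F x))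
    (FA : Module.End ℂ V)
    (hFA : ∀ v : V, HasSum (fun i : ℕ => a i • (A ^ i) v) (FA v))
    (P : Fin k → Polynomial ℂ)
    (hP : ∀ i, P i = ∑ p ∈ Finset.range (m i),
      Polynomial.C (iteratedDeriv p F (lam i) / (Nat.factorial p)) *
        (Polynomial.X - Polynomial.C (lam i)) ^ p) :
    FA = ∑ i, Polynomial.aeval A (P i) * Polynomial.aeval A (That i) := by
  have hT : ∀ q : ℂ[X], (∀ j, (X - C (lam j)) ^ m j ∣ q) → aeval A q = 0 := fun q hq =>
    aeval_eq_zero_of_dvd_aeval_eq_zero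
      (Fintype.prod_dvd_of_coprime (fun i j hij => (pairwise_coprime_X_sub_C hinj hij).pow) hq) hTA
  have hone : ∑ i, aeval A (That i) = 1 := by
    rw [← map_sum, ← sub_eq_zero, ← map_one (aeval (R := ℂ) A), ← map_sub]
    exact hT _ (X_sub_C_pow_dvd_sum_sub_one hinterp)
  have hker : ∀ i v, ((A - algebraMap ℂ _ (lam i)) ^ m i) (aeval A (That i) v) = 0 := by
    intro i v
    suffices h : aeval A ((X - C (lam i)) ^ m i * That i) = 0 by
      simpa [← Module.End.mul_apply] using congr($h v)
    refine hT _ fun j => ?_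
    rcases eq_or_ne j i with rfl | hji
    · exact dvd_mul_right _ _
    · exact (X_sub_C_pow_dvd_of_ne hinterp hji).mul_left _
  calc FA = FA * ∑ i, aeval A (That i) := by rw [hone, mul_one]
    _ = ∑ i, aeval A (P i) * aeval A (That i) := by
      rw [mul_sum]
      refine sum_congr rfl fun i _ => LinearMap.ext fun v => (hFA _).unique ?_
      rw [Module.End.mul_apply, hP, aeval_sum_C_mul_X_sub_C_pow, LinearMap.sum_apply]
      exact hasSum_smul_pow_apply_of_pow_sub_apply_eq_zero hFa (hker i v)

theorem entire_function_of_operator_via_resolvents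
    {V : Type*} [NormedAddCommGroup V] [NormedSpace ℂ V] [FiniteDimensional ℂ V]
    {k n : ℕ} (A : Module.End ℂ V)
    (lam : Fin k → ℂ) (hinj : Function.Injective lam)
    (m : Fin k → ℕ) (hm : ∀ j, 0 < m j) (hsum : ∑ j, m j = n)
    (hTA : Polynomial.aeval A (∏ j, (Polynomial.X - Polynomial.C (lam j)) ^ m j) = 0)
    (That : Fin k → Polynomial ℂ)
    (hdeg : ∀ i, (That i).degree < n)
    (hinterp : ∀ (i j : Fin k) (d : ℕ), d < m j →
      (Polynomial.derivative^[d] (That i)).eval (lam j) =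
        if j = i ∧ d = 0 then 1 else 0)
    (F : ℂ → ℂ) (a : ℕ → ℂ)
    (hFa : ∀ x : ℂ, HasSum (fun i : ℕ => a i * x ^ i) (F x))
    (FA : Module.End ℂ V)
    (hFA : ∀ v : V, HasSum (fun i : ℕ => a i • (A ^ i) v) (FA v))
    (P : Fin k → Polynomial ℂ)
    (hP : ∀ i, P i = ∑ p ∈ Finset.range (m i),
      Polynomial.C (iteratedDeriv p F (lam i) / (Nat.factorial p)) *
        (Polynomial.X - Polynomial.C (lam i)) ^ p) :
    FA = ∑ i, Polynomial.aeval A (P i) * Polynomial.aeval A (That i) :=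
  entire_function_of_operator_via_resolvents_general A lam hinj m hTA That hinterp F a hFa FA hFA P
    hP
end
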